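/- Let α ∈ (0,∞) and q ∈ [1,∞). Then there exists a constant c ∈ (0,∞) such that for all δ ∈ (0,δ₀] and all t ∈ [0,1] one has P(|X̂^δ_{t̲^δ} − X̂^δ_t| ≥ α·ε₂^δ and X̂^δ_{t̲^δ} ∈ Θ^{ε₂^δ}) ≤ c·δ^q. (Lemma 5.5(i).) -/

import Mathlib

open MeasureTheory ProbabilityTheory Filter Set
open scoped ENNReal NNReal

noncomputable section

namespace AdaptiveQM

/-- The open interval `(ξ_{i-1}, ξ_i)` (with `ξ₀ = -∞`, `ξ_{k+1} = ∞`) determined by the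
strictly increasing family `ξ : Fin k → ℝ`. -/
def piece {k : ℕ} (ξ : Fin k → ℝ) (i : Fin (k + 1)) : Set ℝ :=
  {x | (∀ j : Fin k, (j : ℕ) < (i : ℕ) → ξ j < x) ∧ ∀ j : Fin k, (i : ℕ) ≤ (j : ℕ) → x < ξ j}

/-- Assumption (μ1)/(σ piecewise Lipschitz): Lipschitz continuity on each interval
`(ξ_{i-1}, ξ_i)`. -/
def PiecewiseLipschitz {k : ℕ} (ξ : Fin k → ℝ) (f : ℝ → ℝ) : Prop :=
  ∀ i : Fin (k + 1), ∃ L : ℝ≥0, LipschitzOnWith L f (piece ξ i)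

/-- Assumptions (μ2)/(σ2): `f` has a Lipschitz continuous derivative on each interval
`(ξ_{i-1}, ξ_i)`. -/
def PiecewiseC1Lipschitz {k : ℕ} (ξ : Fin k → ℝ) (f : ℝ → ℝ) : Prop :=
  ∀ i : Fin (k + 1), ∃ (f' : ℝ → ℝ) (L : ℝ≥0),
    (∀ x ∈ piece ξ i, HasDerivAt f (f' x) x) ∧ LipschitzOnWith L f' (piece ξ i)

/-- `W` is a one-dimensional Brownian motion on `(Ω, F, P)`. -/
structure IsBrownianMotion {Ω : Type*} [MeasurableSpace Ω] (P : Measure Ω)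
    (W : ℝ → Ω → ℝ) : Prop where
  meas : ∀ t, Measurable (W t)
  init : ∀ᵐ ω ∂P, W 0 ω = 0
  cont : ∀ᵐ ω ∂P, Continuous fun t => W t ω
  gauss : ∀ s t : ℝ, 0 ≤ s → s ≤ t →
    P.map (fun ω => W t ω - W s ω) = gaussianReal 0 (Real.toNNReal (t - s))
  indep : ∀ (n : ℕ) (t : Fin (n + 1) → ℝ), Monotone t → (∀ i, 0 ≤ t i) →
    iIndepFun
      (fun (i : Fin n) ω => W (t i.succ) ω - W (t i.castSucc) ω) P

/-- `ε₁^δ = √δ · log²(1/δ)`. -/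
def eps1 (δ : ℝ) : ℝ := Real.sqrt δ * (Real.log (1 / δ)) ^ 2

/-- `ε₂^δ = δ · log⁴(1/δ)`. -/
def eps2 (δ : ℝ) : ℝ := δ * (Real.log (1 / δ)) ^ 4

/-- The adaptive step-size function `h^δ`. -/
def stepSize (Θ : Set ℝ) (δ x : ℝ) : ℝ :=
  if Metric.infDist x Θ < eps2 δ then δ ^ 2 * (Real.log (1 / δ)) ^ 4
  else if Metric.infDist x Θ < eps1 δ then (Metric.infDist x Θ / (Real.log (1 / δ)) ^ 2) ^ 2
  else δ

/-- One quasi-Milstein step: value at time `t` started from value `y` at time `u`, driven by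
the path `w`.  Note `deriv s y = s'(y)` if `s` is differentiable at `y` and `0` otherwise. -/
def milsteinStep (b s : ℝ → ℝ) (y u t : ℝ) (w : ℝ → ℝ) : ℝ :=
  y + b y * (t - u) + s y * (w t - w u)
    + (1 / 2) * (s y * deriv s y) * ((w t - w u) ^ 2 - (t - u))

variable {Ω : Type*}

/-- The grid of the adaptive quasi-Milstein scheme: `grid b s Θ x₀ W δ i ω = (τ_i^δ(ω), X̂^δ_{τ_i^δ}(ω))`. -/
def grid (b s : ℝ → ℝ) (Θ : Set ℝ) (x₀ : ℝ) (W : ℝ → Ω → ℝ) (δ : ℝ) :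
    ℕ → Ω → ℝ × ℝ
  | 0 => fun _ => (0, x₀)
  | i + 1 => fun ω =>
      let p := grid b s Θ x₀ W δ i ω
      let t' := p.1 + stepSize Θ δ p.2
      (t', milsteinStep b s p.2 p.1 t' fun u => W u ω)

/-- `τ_i^δ`. -/
def gridTime (b s : ℝ → ℝ) (Θ : Set ℝ) (x₀ : ℝ) (W : ℝ → Ω → ℝ) (δ : ℝ) (i : ℕ) (ω : Ω) : ℝ :=
  (grid b s Θ x₀ W δ i ω).1

/-- `X̂^δ_{τ_i^δ}`. -/
def gridVal (b s : ℝ → ℝ) (Θ : Set ℝ) (x₀ : ℝ) (W : ℝ → Ω → ℝ) (δ : ℝ) (i : ℕ) (ω : Ω) : ℝ :=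
  (grid b s Θ x₀ W δ i ω).2

/-- The largest index `i` with `τ_i^δ ≤ t`. -/
def lastIdx (b s : ℝ → ℝ) (Θ : Set ℝ) (x₀ : ℝ) (W : ℝ → Ω → ℝ) (δ t : ℝ) (ω : Ω) : ℕ :=
  sSup {i : ℕ | gridTime b s Θ x₀ W δ i ω ≤ t}

/-- `t̲^δ = max{τ_i^δ : τ_i^δ ≤ t}`. -/
def lastTime (b s : ℝ → ℝ) (Θ : Set ℝ) (x₀ : ℝ) (W : ℝ → Ω → ℝ) (δ t : ℝ) (ω : Ω) : ℝ :=
  gridTime b s Θ x₀ W δ (lastIdx b s Θ x₀ W δ t ω) ω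

/-- `X̂^δ_{t̲^δ}`. -/
def lastVal (b s : ℝ → ℝ) (Θ : Set ℝ) (x₀ : ℝ) (W : ℝ → Ω → ℝ) (δ t : ℝ) (ω : Ω) : ℝ :=
  gridVal b s Θ x₀ W δ (lastIdx b s Θ x₀ W δ t ω) ω

/-- The time-continuous adaptive quasi-Milstein scheme `X̂^δ_t`. -/
def scheme (b s : ℝ → ℝ) (Θ : Set ℝ) (x₀ : ℝ) (W : ℝ → Ω → ℝ) (δ t : ℝ) (ω : Ω) : ℝ :=
  milsteinStep b s (lastVal b s Θ x₀ W δ t ω) (lastTime b s Θ x₀ W δ t ω) t fun u => W u ω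

/-- `N(X̂^δ_1) = min{i ∈ ℕ : τ_i^δ ≥ 1}`, the number of evaluations of `W`. -/
def numSteps (b s : ℝ → ℝ) (Θ : Set ℝ) (x₀ : ℝ) (W : ℝ → Ω → ℝ) (δ : ℝ) (ω : Ω) : ℕ :=
  sInf {i : ℕ | 1 ≤ gridTime b s Θ x₀ W δ i ω}

/-- The augmented filtration `F_t = σ(σ(W_s : 0 ≤ s ≤ t) ∪ N)` generated by `W`. -/
def augFilt [MeasurableSpace Ω] (P : Measure Ω) (W : ℝ → Ω → ℝ) (t : ℝ) :
    MeasurableSpace Ω :=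
  (⨆ s ∈ Set.Icc (0 : ℝ) t, MeasurableSpace.comap (W s) inferInstance) ⊔
    MeasurableSpace.generateFrom {A | MeasurableSet A ∧ P A = 0}

/-- `τ` is a stopping time with respect to the augmented Brownian filtration. -/
def IsAugStoppingTime [MeasurableSpace Ω] (P : Measure Ω) (W : ℝ → Ω → ℝ) (τ : Ω → ℝ) :
    Prop :=
  ∀ t : ℝ, MeasurableSet[augFilt P W t] {ω | τ ω ≤ t}

/-- The σ-algebra `F_τ` of the `τ`-past. -/
def stoppedSigma [MeasurableSpace Ω] (P : Measure Ω) (W : ℝ → Ω → ℝ) (τ : Ω → ℝ) :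
    MeasurableSpace Ω :=
  MeasurableSpace.generateFrom
    {A | MeasurableSet A ∧ ∀ t : ℝ, MeasurableSet[augFilt P W t] (A ∩ {ω | τ ω ≤ t})}

/-- The shifted process `W^τ_t = W_{τ+t} - W_τ`. -/
def shiftedBM (W : ℝ → Ω → ℝ) (τ : Ω → ℝ) : ℝ → Ω → ℝ :=
  fun t ω => W (τ ω + t) ω - W (τ ω) ω

/-- Left-point Riemann sums for the Itô integral `∫₀ᵗ H dW` along dyadic partitions. -/
def riemannSum (H : ℝ → Ω → ℝ) (W : ℝ → Ω → ℝ) (t : ℝ) (n : ℕ) (ω : Ω) : ℝ :=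
  ∑ i ∈ Finset.range (2 ^ n),
    H (t * i / 2 ^ n) ω * (W (t * (i + 1) / 2 ^ n) ω - W (t * i / 2 ^ n) ω)

/-- `X` is a strong solution of `dX_t = b(X_t) dt + s(X_t) dW_t`, `X₀ = x₀`: it is adapted to
the Brownian motion, has continuous paths, and satisfies the integral equation, the stochastic
integral being the limit in probability of left-point Riemann sums. -/
def IsStrongSolution [MeasurableSpace Ω] (P : Measure Ω) (W : ℝ → Ω → ℝ)
    (b s : ℝ → ℝ) (x₀ : ℝ) (X : ℝ → Ω → ℝ) : Prop :=
  (∀ t, Measurable (X t)) ∧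
  (∀ᵐ ω ∂P, Continuous fun t => X t ω) ∧
  (∀ᵐ ω ∂P, X 0 ω = x₀) ∧
  (∀ t : ℝ, 0 ≤ t → ∃ g : (ℝ → ℝ) → ℝ, Measurable g ∧
    ∀ᵐ ω ∂P, X t ω = g fun u => W (min u t) ω) ∧
  (∀ t : ℝ, 0 ≤ t →
    TendstoInMeasure P (fun n ω => riemannSum (fun u ω' => s (X u ω')) W t n ω) atTop
      fun ω => X t ω - x₀ - ∫ u in (0 : ℝ)..t, b (X u ω))

/-- The bump function `φ(x) = (1-x²)⁴ · 1_{[-1,1]}(x)`. -/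
def phiBump (x : ℝ) : ℝ := if x ∈ Set.Icc (-1 : ℝ) 1 then (1 - x ^ 2) ^ 4 else 0

/-- `ρ_{z,α}`, with the convention `1/0 = ∞`. -/
def rho {k : ℕ} (z α : Fin k → ℝ) : ℝ≥0∞ :=
  (⨅ i : Fin k, if α i = 0 then ⊤ else ENNReal.ofReal (1 / (8 * |α i|))) ⊓
    ⨅ i : Fin k, ⨅ j : Fin k,
      if (i : ℕ) + 1 = (j : ℕ) then ENNReal.ofReal ((z j - z i) / 2) else ⊤

/-- The transformation `G_{z,α,ν}`. -/
def Gmap {k : ℕ} (z α : Fin k → ℝ) (ν : ℝ) (x : ℝ) : ℝ :=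
  x + ∑ i : Fin k, α i * (x - z i) * |x - z i| * phiBump ((x - z i) / ν)

/-- The inverse `G_{z,α,ν}^{-1}`. -/
def Ginv {k : ℕ} (z α : Fin k → ℝ) (ν : ℝ) : ℝ → ℝ := Function.invFun (Gmap z α ν)

/-- `α_i = (μ(ξ_i-) - μ(ξ_i+)) / (2σ²(ξ_i))`. -/
def alphaCoef (b s : ℝ → ℝ) {k : ℕ} (ξ : Fin k → ℝ) (i : Fin k) : ℝ :=
  (Function.leftLim b (ξ i) - Function.rightLim b (ξ i)) / (2 * (s (ξ i)) ^ 2)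

open Classical in
/-- `G''_{ξ,α,ν}` extended to all of `ℝ` by
`G''(ξ_i) = 2α_i + 2(μ(ξ_i+) - μ(ξ_i))/σ²(ξ_i)`. -/
def GsecondExt (b s : ℝ → ℝ) {k : ℕ} (ξ : Fin k → ℝ) (ν : ℝ) (x : ℝ) : ℝ :=
  if h : ∃ i, ξ i = x then
    2 * alphaCoef b s ξ h.choose + 2 * (Function.rightLim b x - b x) / (s x) ^ 2
  else deriv (deriv (Gmap ξ (alphaCoef b s ξ) ν)) x

/-- The transformed drift `μ̃ = (G'·μ + ½G''·σ²) ∘ G⁻¹`. -/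
def tildeDrift (b s : ℝ → ℝ) {k : ℕ} (ξ : Fin k → ℝ) (ν : ℝ) (x : ℝ) : ℝ :=
  deriv (Gmap ξ (alphaCoef b s ξ) ν) (Ginv ξ (alphaCoef b s ξ) ν x) *
      b (Ginv ξ (alphaCoef b s ξ) ν x) +
    (1 / 2) * GsecondExt b s ξ ν (Ginv ξ (alphaCoef b s ξ) ν x) *
      (s (Ginv ξ (alphaCoef b s ξ) ν x)) ^ 2

/-- The transformed diffusion coefficient `σ̃ = (G'·σ) ∘ G⁻¹`. -/
def tildeDiff (b s : ℝ → ℝ) {k : ℕ} (ξ : Fin k → ℝ) (ν : ℝ) (x : ℝ) : ℝ :=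
  deriv (Gmap ξ (alphaCoef b s ξ) ν) (Ginv ξ (alphaCoef b s ξ) ν x) *
    s (Ginv ξ (alphaCoef b s ξ) ν x)

/-- The set `S = (⋃ᵢ (ξ_{i-1},ξ_i)²)ᶜ ⊆ ℝ²`. -/
def badSet {k : ℕ} (ξ : Fin k → ℝ) : Set (ℝ × ℝ) :=
  (⋃ i : Fin (k + 1), (piece ξ i) ×ˢ (piece ξ i))ᶜ

/-!
If `X̂_{t̲}` lies within `ε₂ = δ log⁴(1/δ)` of `Θ`, the step taken there has the smallest size
`h = δ ε₂`, and `b`, `σ`, `σσ'` are bounded near `Θ` by some `C`. The Milstein increment over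
`[t̲, t]` is then controlled by `C (|ΔW| + ΔW²)` up to a drift term that is negligible for small
`δ`, so the event forces `|W_t - W_v| ≥ α ε₂ / (3C)` for some `v ∈ [t - h, t]` (as `t̲` is
random, a supremum over `v` is needed). Dyadic chaining with Gaussian tails bounds this
probability by `4 exp(-c log⁴(1/δ))`, which is `O(δ^q)` for every `q`.
-/

open Real

lemma _root_.ProbabilityTheory.hasSubgaussianMGF_id_gaussianReal {v V : ℝ≥0} (hvV : v ≤ V) :
    HasSubgaussianMGF id V (gaussianReal 0 v) where
  integrable_exp_mul := integrable_exp_mul_gaussianReal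
  mgf_le t := by
    simp only [mgf_id_gaussianReal, zero_mul, zero_add]
    gcongr

lemma _root_.ProbabilityTheory.HasSubgaussianMGF.measureReal_abs_ge_le {Ω : Type*}
    [MeasurableSpace Ω] {μ : Measure Ω} {X : Ω → ℝ} {c : ℝ≥0} (h : HasSubgaussianMGF X c μ)
    {ε : ℝ} (hε : 0 ≤ ε) :
    μ.real {ω | ε ≤ |X ω|} ≤ 2 * exp (-ε ^ 2 / (2 * c)) := by
  have hsplit : {ω | ε ≤ |X ω|} = {ω | ε ≤ X ω} ∪ {ω | ε ≤ (-X) ω} := by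
    ext ω
    exact le_abs (a := ε) (b := X ω)
  rw [hsplit]
  linarith [measureReal_union_le (μ := μ) {ω | ε ≤ X ω} {ω | ε ≤ (-X) ω}, h.measure_ge_le hε,
    h.neg.measure_ge_le hε]

def dyadicPoint (a ℓ : ℝ) (n j : ℕ) : ℝ := a + ℓ * j / 2 ^ n

section DyadicChaining

variable {w : ℝ → ℝ} {a ℓ : ℝ} {e : ℕ → ℝ}

lemma dyadicPoint_succ_two_mul (n m : ℕ) :
    dyadicPoint a ℓ (n + 1) (2 * m) = dyadicPoint a ℓ n m := by
  simp only [dyadicPoint, pow_succ]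
  push_cast
  field_simp

lemma dyadicPoint_two_pow (n : ℕ) : dyadicPoint a ℓ n (2 ^ n) = a + ℓ := by
  simp only [dyadicPoint]
  push_cast
  field_simp

lemma abs_sub_dyadicPoint_le
    (hinc : ∀ n, ∀ j < 2 ^ n, |w (dyadicPoint a ℓ n (j + 1)) - w (dyadicPoint a ℓ n j)| ≤ e n)
    (n : ℕ) :
    ∀ j ≤ 2 ^ n, |w (a + ℓ) - w (dyadicPoint a ℓ n j)| ≤ ∑ m ∈ Finset.range (n + 1), e m := by
  have he : ∀ n, 0 ≤ e n := fun n => (abs_nonneg _).trans (hinc n 0 (by positivity))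
  induction n with
  | zero =>
    intro j hj
    have h01 := hinc 0 0 one_pos
    rw [zero_add, ← pow_zero 2, dyadicPoint_two_pow] at h01
    interval_cases j
    · simpa using h01
    · simpa [← dyadicPoint_two_pow (a := a) (ℓ := ℓ) 0] using he 0
  | succ n ih =>
    intro j hj
    rw [Finset.sum_range_succ]
    obtain ⟨m, rfl | rfl⟩ := Nat.even_or_odd' j
    · rw [dyadicPoint_succ_two_mul]
      linarith [ih m (by rw [pow_succ] at hj; omega), he (n + 1)]
    · have hstep := hinc (n + 1) (2 * m + 1) (by rw [pow_succ] at hj ⊢; omega)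
      rw [show 2 * m + 1 + 1 = 2 * (m + 1) by ring, dyadicPoint_succ_two_mul] at hstep
      linarith [ih (m + 1) (by rw [pow_succ] at hj; omega),
        abs_sub_le (w (a + ℓ)) (w (dyadicPoint a ℓ n (m + 1)))
          (w (dyadicPoint a ℓ (n + 1) (2 * m + 1)))]

lemma abs_sub_le_of_dyadic_increments (hw : Continuous w) (hℓ : 0 ≤ ℓ)
    (hinc : ∀ n, ∀ j < 2 ^ n, |w (dyadicPoint a ℓ n (j + 1)) - w (dyadicPoint a ℓ n j)| ≤ e n)
    {B : ℝ} (hB : ∀ n, ∑ m ∈ Finset.range (n + 1), e m ≤ B) {v : ℝ} (hv : v ∈ Icc a (a + ℓ)) :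
    |w (a + ℓ) - w v| ≤ B := by
  obtain ⟨x, ⟨hx0, hx1⟩, rfl⟩ : ∃ x ∈ Icc (0 : ℝ) 1, a + ℓ * x = v := by
    rcases hℓ.eq_or_lt with rfl | hℓ
    · exact ⟨0, by simp, by simp at hv; simp [hv]⟩
    · refine ⟨(v - a) / ℓ, ⟨div_nonneg (by linarith [hv.1]) hℓ.le, ?_⟩, by field_simp; ring⟩
      rw [div_le_one hℓ]
      linarith [hv.2]
  -- the dyadic points `⌈2ⁿ x⌉ / 2ⁿ` approach `x` from the right
  set J : ℕ → ℕ := fun n => ⌈2 ^ n * x⌉₊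
  have hJ : ∀ n, J n ≤ 2 ^ n := fun n =>
    Nat.ceil_le.2 (by push_cast; nlinarith [pow_pos (two_pos (α := ℝ)) n])
  have hdist : ∀ n, |dyadicPoint a ℓ n (J n) - (a + ℓ * x)| ≤ ℓ * (1 / 2) ^ n := by
    intro n
    have h2n : (0 : ℝ) < 2 ^ n := by positivity
    have hle : (2 : ℝ) ^ n * x ≤ J n := Nat.le_ceil _
    have hlt : (J n : ℝ) < 2 ^ n * x + 1 := Nat.ceil_lt_add_one (by positivity)
    have heq : dyadicPoint a ℓ n (J n) - (a + ℓ * x) = ℓ * (J n - 2 ^ n * x) / 2 ^ n := by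
      simp only [dyadicPoint]
      field_simp
      ring
    rw [heq, abs_of_nonneg (by have := mul_nonneg hℓ (sub_nonneg.2 hle); positivity),
      div_le_iff₀ h2n, one_div_pow, mul_assoc, one_div_mul_cancel h2n.ne', mul_one]
    nlinarith
  have hlim : Tendsto (fun n => dyadicPoint a ℓ n (J n)) atTop (nhds (a + ℓ * x)) := by
    refine tendsto_iff_dist_tendsto_zero.2 (squeeze_zero (fun _ => dist_nonneg)
      (fun n => (Real.dist_eq _ _).trans_le (hdist n)) ?_)
    simpa using (tendsto_pow_atTop_nhds_zero_of_lt_one (by norm_num : (0 : ℝ) ≤ 1 / 2)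
      (by norm_num)).const_mul ℓ
  refine le_of_tendsto' ((tendsto_const_nhds.sub (hw.continuousAt.tendsto.comp hlim)).abs)
    fun n => ?_
  exact (abs_sub_dyadicPoint_le hinc n (J n) (hJ n)).trans (hB n)

-- the thresholds `r/8 (3/4)ⁿ` sum to `r/2` yet decay slower than `2^(-n/2)`, which is what
-- makes the Gaussian tails of the `2ⁿ` increments of level `n` summable
lemma exists_le_abs_dyadic_increment_of_le_abs_sub (hw : Continuous w) {t r v : ℝ} (hat : a ≤ t)
    (hr : 0 < r) (hv : v ∈ Icc a t) (hrv : r ≤ |w t - w v|) :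
    ∃ n, ∃ j < 2 ^ n, r / 8 * (3 / 4) ^ n ≤
      |w (dyadicPoint a (t - a) n (j + 1)) - w (dyadicPoint a (t - a) n j)| := by
  by_contra! hsmall
  have hsum : ∀ n, ∑ m ∈ Finset.range (n + 1), r / 8 * (3 / 4 : ℝ) ^ m ≤ r / 2 := by
    intro n
    rw [← Finset.mul_sum, Finset.range_eq_Ico]
    have := geom_sum_Ico_le_of_lt_one (m := 0) (n := n + 1) (x := (3 / 4 : ℝ)) (by norm_num)
      (by norm_num)
    nlinarith
  have := abs_sub_le_of_dyadic_increments hw (sub_nonneg.2 hat) (fun n j hj => (hsmall n j hj).le)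
    hsum (by rwa [add_sub_cancel])
  rw [add_sub_cancel] at this
  linarith

end DyadicChaining

lemma two_pow_mul_exp_le {K : ℝ} (hK : 8 * log 4 ≤ K) (n : ℕ) :
    2 ^ n * (2 * exp (-(K * (9 / 8) ^ n))) ≤ 4 * exp (-K) / 2 / 2 ^ n := by
  have hgrowth : 1 + n * (1 / 8) ≤ (9 / 8 : ℝ) ^ n := by
    have := one_add_mul_le_pow (show (-2 : ℝ) ≤ 1 / 8 by norm_num) n
    norm_num at this ⊢
    linarith
  have hfour : (4 : ℝ) ^ n * exp (-(K * (9 / 8) ^ n)) ≤ exp (-K) := by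
    rw [← exp_log (by norm_num : (0 : ℝ) < 4), ← exp_nat_mul, ← exp_add]
    gcongr
    nlinarith [log_pos (by norm_num : (1 : ℝ) < 4)]
  rw [le_div_iff₀ (by positivity), le_div_iff₀ (by positivity)]
  calc 2 ^ n * (2 * exp (-(K * (9 / 8) ^ n))) * 2 ^ n * 2
      = 4 * ((2 * 2 : ℝ) ^ n * exp (-(K * (9 / 8) ^ n))) := by rw [mul_pow]; ring
    _ ≤ 4 * exp (-K) := by norm_num; linarith

section BrownianTails

variable [MeasurableSpace Ω] {P : Measure Ω} {W : ℝ → Ω → ℝ}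

lemma IsBrownianMotion.measure_le_abs_sub_le [IsFiniteMeasure P] (hW : IsBrownianMotion P W)
    {u v V r : ℝ} (hv : 0 ≤ v) (hvu : v ≤ u) (huv : u - v ≤ V) (hr : 0 ≤ r) :
    P {ω | r ≤ |W u ω - W v ω|} ≤ ENNReal.ofReal (2 * exp (-r ^ 2 / (2 * V))) := by
  have hX : HasSubgaussianMGF (fun ω => W u ω - W v ω) V.toNNReal P := by
    refine (HasSubgaussianMGF.id_map_iff (X := fun ω => W u ω - W v ω)
      ((hW.meas u).sub (hW.meas v)).aemeasurable).1 ?_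
    rw [hW.gauss v u hv hvu]
    exact hasSubgaussianMGF_id_gaussianReal (Real.toNNReal_le_toNNReal huv)
  rw [← ofReal_measureReal]
  gcongr
  simpa [Real.coe_toNNReal V (by linarith)] using hX.measureReal_abs_ge_le hr

lemma IsBrownianMotion.measure_le_abs_dyadic_increment_le [IsFiniteMeasure P]
    (hW : IsBrownianMotion P W) {a t h r : ℝ} (ha : 0 ≤ a) (hat : a ≤ t) (hth : t - a ≤ h)
    (hh : 0 < h) (hr : 0 ≤ r) (n j : ℕ) :
    P {ω | r / 8 * (3 / 4) ^ n ≤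
        |W (dyadicPoint a (t - a) n (j + 1)) ω - W (dyadicPoint a (t - a) n j) ω|}
      ≤ ENNReal.ofReal (2 * exp (-(r ^ 2 / (128 * h) * (9 / 8) ^ n))) := by
  have hstep : dyadicPoint a (t - a) n (j + 1) - dyadicPoint a (t - a) n j = (t - a) / 2 ^ n := by
    simp only [dyadicPoint]; push_cast; ring
  have hexp : -(r / 8 * (3 / 4) ^ n) ^ 2 / (2 * (h / 2 ^ n))
      = -(r ^ 2 / (128 * h) * (9 / 8) ^ n) := by
    have : (9 / 8 : ℝ) ^ n = ((3 / 4) ^ n) ^ 2 * 2 ^ n := by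
      rw [← pow_mul, mul_comm n 2, pow_mul, ← mul_pow]; norm_num
    rw [this]; field_simp; ring
  rw [← hexp]
  have hspan := sub_nonneg.2 hat
  refine hW.measure_le_abs_sub_le ?_ ?_ ?_ (by positivity)
  · simp only [dyadicPoint]; positivity
  · linarith [div_nonneg hspan (by positivity : (0 : ℝ) ≤ 2 ^ n)]
  · rw [hstep]; gcongr

lemma IsBrownianMotion.measure_exists_le_abs_sub_le [IsFiniteMeasure P]
    (hW : IsBrownianMotion P W) {a t h r : ℝ} (ha : 0 ≤ a) (hat : a ≤ t) (hth : t - a ≤ h)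
    (hr : 0 < r) (hK : 8 * log 4 ≤ r ^ 2 / (128 * h)) :
    P {ω | ∃ v ∈ Icc a t, r ≤ |W t ω - W v ω|}
      ≤ ENNReal.ofReal (4 * exp (-(r ^ 2 / (128 * h)))) := by
  set K := r ^ 2 / (128 * h)
  have hh : 0 < h := by
    by_contra! hh
    have : K ≤ 0 := div_nonpos_of_nonneg_of_nonpos (sq_nonneg r) (by linarith)
    linarith [log_pos (by norm_num : (1 : ℝ) < 4)]
  set A : ℕ → ℕ → Set Ω := fun n j => {ω | r / 8 * (3 / 4) ^ n ≤
    |W (dyadicPoint a (t - a) n (j + 1)) ω - W (dyadicPoint a (t - a) n j) ω|}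
  have hsub : {ω | ∃ v ∈ Icc a t, r ≤ |W t ω - W v ω|} ≤ᵐ[P]
      (⋃ n, ⋃ j ∈ Finset.range (2 ^ n), A n j : Set Ω) := by
    filter_upwards [hW.cont] with ω hω ⟨v, hv, hrv⟩
    obtain ⟨n, j, hj, hA⟩ := exists_le_abs_dyadic_increment_of_le_abs_sub hω hat hr hv hrv
    exact mem_iUnion₂.2 ⟨n, j, mem_iUnion.2 ⟨Finset.mem_range.2 hj, hA⟩⟩
  have hlevel : ∀ n, P (⋃ j ∈ Finset.range (2 ^ n), A n j)
      ≤ ENNReal.ofReal (4 * exp (-K) / 2 / 2 ^ n) := by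
    intro n
    refine (measure_biUnion_finset_le _ _).trans ((Finset.sum_le_sum fun j _ =>
      hW.measure_le_abs_dyadic_increment_le ha hat hth hh hr.le n j).trans ?_)
    rw [Finset.sum_const, Finset.card_range, nsmul_eq_mul, ← ENNReal.ofReal_natCast,
      ← ENNReal.ofReal_mul (by positivity)]
    exact ENNReal.ofReal_le_ofReal (by push_cast; exact two_pow_mul_exp_le hK n)
  calc P {ω | ∃ v ∈ Icc a t, r ≤ |W t ω - W v ω|}
      ≤ P (⋃ n, ⋃ j ∈ Finset.range (2 ^ n), A n j) := measure_mono_ae hsub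
    _ ≤ ∑' n, P (⋃ j ∈ Finset.range (2 ^ n), A n j) := measure_iUnion_le _
    _ ≤ ∑' n : ℕ, ENNReal.ofReal (4 * exp (-K) / 2 / 2 ^ n) := ENNReal.tsum_le_tsum hlevel
    _ = ENNReal.ofReal (4 * exp (-K)) := by
      rw [← ENNReal.ofReal_tsum_of_nonneg (fun n => by positivity) (summable_geometric_two' _),
        tsum_geometric_two']

end BrownianTails

lemma exists_bound_milsteinCoeffs {b s : ℝ → ℝ} {S : Set ℝ} (hS : Bornology.IsBounded S)
    (hb : Continuous b) {L : ℝ≥0} (hs : LipschitzWith L s) :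
    ∃ C, ∀ y ∈ S, |b y| ≤ C ∧ |s y| ≤ C ∧ |s y * deriv s y| ≤ C := by
  obtain ⟨Cb, hCb⟩ := hS.isCompact_closure.exists_bound_of_continuousOn hb.continuousOn
  obtain ⟨Cs, hCs⟩ := hS.isCompact_closure.exists_bound_of_continuousOn hs.continuous.continuousOn
  refine ⟨max Cb (max Cs (Cs * L)), fun y hy => ?_⟩
  have hby : |b y| ≤ Cb := hCb y (subset_closure hy)
  have hsy : |s y| ≤ Cs := hCs y (subset_closure hy)
  have hds : |deriv s y| ≤ L := by simpa using norm_deriv_le_of_lipschitz (x₀ := y) hs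
  refine ⟨hby.trans (le_max_left _ _), hsy.trans ((le_max_left _ _).trans (le_max_right _ _)),
    ?_⟩
  rw [abs_mul]
  exact (mul_le_mul hsy hds (abs_nonneg _) ((abs_nonneg _).trans hsy)).trans
    ((le_max_right _ _).trans (le_max_right _ _))

lemma abs_milsteinStep_sub_le {b s w : ℝ → ℝ} {y u t C : ℝ} (hb : |b y| ≤ C) (hs : |s y| ≤ C)
    (hss : |s y * deriv s y| ≤ C) (hut : u ≤ t) :
    |milsteinStep b s y u t w - y| ≤ C * (3 / 2 * (t - u) + |w t - w u| + (w t - w u) ^ 2 / 2) := by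
  set Δw := w t - w u
  have hΔt : 0 ≤ t - u := sub_nonneg.2 hut
  have hdrift : |b y * (t - u)| ≤ C * (t - u) := by
    rw [abs_mul, abs_of_nonneg hΔt]; gcongr
  have hdiff : |s y * Δw| ≤ C * |Δw| := by
    rw [abs_mul]; gcongr
  have hcorr : |1 / 2 * (s y * deriv s y) * (Δw ^ 2 - (t - u))| ≤ C * ((Δw ^ 2 + (t - u)) / 2) := by
    have : |Δw ^ 2 - (t - u)| ≤ Δw ^ 2 + (t - u) :=
      abs_sub_le_iff.2 ⟨by linarith [sq_nonneg Δw], by linarith [sq_nonneg Δw]⟩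
    rw [abs_mul, abs_mul, abs_of_pos (by norm_num : (0 : ℝ) < 1 / 2)]
    have := mul_le_mul hss this (abs_nonneg _) ((abs_nonneg _).trans hss)
    linarith
  have hstep : milsteinStep b s y u t w - y
      = b y * (t - u) + s y * Δw + 1 / 2 * (s y * deriv s y) * (Δw ^ 2 - (t - u)) := by
    simp only [milsteinStep, Δw]; ring
  rw [hstep]
  linarith [abs_add_le (b y * (t - u) + s y * Δw) (1 / 2 * (s y * deriv s y) * (Δw ^ 2 - (t - u))),
    abs_add_le (b y * (t - u)) (s y * Δw)]

lemma stepSize_of_infDist_lt {Θ : Set ℝ} {δ x : ℝ} (hx : Metric.infDist x Θ < eps2 δ) :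
    stepSize Θ δ x = δ * eps2 δ := by
  rw [stepSize, if_pos hx, eps2]; ring

lemma exists_pos_le_stepSize (Θ : Set ℝ) {δ : ℝ} (h0 : 0 < δ) (h1 : δ < 1) :
    ∃ m > 0, ∀ x, m ≤ stepSize Θ δ x := by
  have hL : 0 < log (1 / δ) := log_pos (one_lt_one_div h0 h1)
  refine ⟨min δ (δ * eps2 δ), lt_min h0 (by unfold eps2; positivity), fun x => ?_⟩
  unfold stepSize
  split_ifs with hnear hmid
  · exact (min_le_right _ _).trans_eq (by rw [eps2]; ring)
  · have hsq : (eps2 δ / log (1 / δ) ^ 2) ^ 2 ≤ (Metric.infDist x Θ / log (1 / δ) ^ 2) ^ 2 := by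
      have : 0 ≤ eps2 δ := by unfold eps2; positivity
      gcongr
      exact not_lt.1 hnear
    have heq : δ * eps2 δ = (eps2 δ / log (1 / δ) ^ 2) ^ 2 := by rw [eps2]; field_simp
    exact (min_le_right _ _).trans (heq.trans_le hsq)
  · exact min_le_left _ _

section Grid

variable (b s : ℝ → ℝ) (Θ : Set ℝ) (x₀ : ℝ) (W : ℝ → Ω → ℝ) {δ : ℝ}

lemma le_gridTime {m : ℝ} (hm : ∀ x, m ≤ stepSize Θ δ x) (i : ℕ) (ω : Ω) :
    i * m ≤ gridTime b s Θ x₀ W δ i ω := by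
  induction i with
  | zero => simp [gridTime, grid]
  | succ i ih =>
    have hstep : gridTime b s Θ x₀ W δ (i + 1) ω
        = gridTime b s Θ x₀ W δ i ω + stepSize Θ δ (gridVal b s Θ x₀ W δ i ω) := rfl
    rw [hstep]
    push_cast
    linarith [hm (gridVal b s Θ x₀ W δ i ω)]

lemma lastTime_nonneg (h0 : 0 < δ) (h1 : δ < 1) (t : ℝ) (ω : Ω) :
    0 ≤ lastTime b s Θ x₀ W δ t ω := by
  obtain ⟨m, hm0, hm⟩ := exists_pos_le_stepSize Θ h0 h1
  exact (by positivity : (0 : ℝ) ≤ _ * m).trans (le_gridTime b s Θ x₀ W hm _ ω)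

lemma mem_Ico_lastTime (h0 : 0 < δ) (h1 : δ < 1) {t : ℝ} (ht : 0 ≤ t) (ω : Ω) :
    t ∈ Ico (lastTime b s Θ x₀ W δ t ω)
      (lastTime b s Θ x₀ W δ t ω + stepSize Θ δ (lastVal b s Θ x₀ W δ t ω)) := by
  obtain ⟨m, hm0, hm⟩ := exists_pos_le_stepSize Θ h0 h1
  set I := {i : ℕ | gridTime b s Θ x₀ W δ i ω ≤ t}
  have hbdd : BddAbove I := by
    refine ⟨⌈t / m⌉₊, fun i hi => ?_⟩
    have : (i : ℝ) ≤ t / m := (le_div_iff₀ hm0).2 ((le_gridTime b s Θ x₀ W hm i ω).trans hi)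
    exact_mod_cast this.trans (Nat.le_ceil _)
  have hzero : 0 ∈ I := by simpa [I, gridTime, grid] using ht
  refine ⟨Nat.sSup_mem ⟨0, hzero⟩ hbdd, ?_⟩
  have hnext : sSup I + 1 ∉ I := fun h => (Nat.lt_succ_self _).not_ge (le_csSup hbdd h)
  exact not_le.1 hnext

variable {b s Θ x₀ W}

lemma exists_le_abs_increment_of_le_abs_sub_scheme (h0 : 0 < δ) (h1 : δ < 1) {t : ℝ}
    (ht : 0 ≤ t) {C A : ℝ} (hC : 0 < C) (hAC : A ≤ 3 * C) (hCA : 3 * C * (δ * eps2 δ) ≤ A)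
    {ω : Ω} (hbd : |b (lastVal b s Θ x₀ W δ t ω)| ≤ C ∧ |s (lastVal b s Θ x₀ W δ t ω)| ≤ C ∧
      |s (lastVal b s Θ x₀ W δ t ω) * deriv s (lastVal b s Θ x₀ W δ t ω)| ≤ C)
    (hnear : Metric.infDist (lastVal b s Θ x₀ W δ t ω) Θ < eps2 δ)
    (hA : A ≤ |lastVal b s Θ x₀ W δ t ω - scheme b s Θ x₀ W δ t ω|) :
    ∃ v ∈ Icc (max (t - δ * eps2 δ) 0) t, A / (3 * C) ≤ |W t ω - W v ω| := by
  set u := lastTime b s Θ x₀ W δ t ω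
  obtain ⟨hut, htu⟩ := mem_Ico_lastTime b s Θ x₀ W h0 h1 ht ω
  rw [stepSize_of_infDist_lt hnear] at htu
  refine ⟨u, ⟨max_le (by linarith) (lastTime_nonneg b s Θ x₀ W h0 h1 t ω), hut⟩, ?_⟩
  set x := W t ω - W u ω
  have hbound : A ≤ C * (3 / 2 * (t - u) + |x| + x ^ 2 / 2) := by
    rw [abs_sub_comm] at hA
    exact hA.trans (abs_milsteinStep_sub_le hbd.1 hbd.2.1 hbd.2.2 hut)
  have hdrift : 3 * C * (t - u) ≤ A := le_trans (by gcongr; linarith) hCA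
  -- for `|x| ≤ 1` the quadratic term is dominated by the linear one
  rw [div_le_iff₀ (by positivity)]
  rcases le_or_gt |x| 1 with hx | hx
  · nlinarith [sq_abs x, abs_nonneg x]
  · nlinarith

end Grid

lemma measure_le_abs_lastVal_sub_scheme_le [MeasurableSpace Ω] {P : Measure Ω}
    [IsFiniteMeasure P] {W : ℝ → Ω → ℝ} (hW : IsBrownianMotion P W) {b s : ℝ → ℝ} {Θ : Set ℝ}
    {x₀ δ t C α : ℝ} (h0 : 0 < δ) (h1 : δ < 1) (ht : 0 ≤ t) (hα : 0 < α) (hαC : α ≤ C)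
    (hbd : ∀ y, Metric.infDist y Θ < eps2 δ → |b y| ≤ C ∧ |s y| ≤ C ∧ |s y * deriv s y| ≤ C)
    (hε : eps2 δ ≤ 1) (hδ : 3 * C * δ ≤ α)
    (hK : 8 * log 4 ≤ α ^ 2 / (1152 * C ^ 2) * log (1 / δ) ^ 4) :
    P {ω | α * eps2 δ ≤ |lastVal b s Θ x₀ W δ t ω - scheme b s Θ x₀ W δ t ω| ∧
        Metric.infDist (lastVal b s Θ x₀ W δ t ω) Θ < eps2 δ}
      ≤ ENNReal.ofReal (4 * exp (-(α ^ 2 / (1152 * C ^ 2) * log (1 / δ) ^ 4))) := by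
  have hL : 0 < log (1 / δ) := log_pos (one_lt_one_div h0 h1)
  have hε0 : 0 < eps2 δ := by unfold eps2; positivity
  have hC : 0 < C := hα.trans_le hαC
  have hexp : (α * eps2 δ / (3 * C)) ^ 2 / (128 * (δ * eps2 δ))
      = α ^ 2 / (1152 * C ^ 2) * log (1 / δ) ^ 4 := by
    unfold eps2; field_simp; ring
  rw [← hexp] at hK ⊢
  refine (measure_mono fun ω hω => ?_).trans (hW.measure_exists_le_abs_sub_le
    (a := max (t - δ * eps2 δ) 0) (le_max_right _ _) (max_le (by nlinarith) ht)
    (by linarith [le_max_left (t - δ * eps2 δ) 0]) (by positivity) hK)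
  exact exists_le_abs_increment_of_le_abs_sub_scheme h0 h1 ht hC (by nlinarith)
    (by nlinarith) (hbd _ hω.2) hω.2 hω.1

lemma exists_forall_four_mul_exp_neg_le_rpow {c q : ℝ} (hc : 0 < c) (hq : 0 ≤ q) :
    ∃ δ₁ > 0, ∀ δ ∈ Ioc 0 δ₁,
      8 * log 4 ≤ c * log (1 / δ) ^ 4 ∧ 4 * exp (-(c * log (1 / δ) ^ 4)) ≤ δ ^ q := by
  set T := max 1 ((q + 8 * log 4) / c)
  refine ⟨exp (-T), exp_pos _, fun δ ⟨h0, hδ⟩ => ?_⟩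
  set L := log (1 / δ)
  have hlogδ : log δ = -L := by simp [L]
  have hTL : T ≤ L := by linarith [(log_le_iff_le_exp h0).2 hδ]
  have hL1 : 1 ≤ L := (le_max_left _ _).trans hTL
  have hcL : q + 8 * log 4 ≤ c * L := (div_le_iff₀' hc).1 ((le_max_right _ _).trans hTL)
  have hlog4 : 0 < log 4 := log_pos (by norm_num)
  -- `c L⁴ ≥ (q + 8 log 4) L³ ≥ q L + 8 log 4` once `L ≥ 1`
  have hgrowth : q * L + 8 * log 4 ≤ c * L ^ 4 := by
    have hL3 : L ≤ L ^ 3 := le_self_pow₀ hL1 (by norm_num)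
    nlinarith [mul_le_mul_of_nonneg_right hcL (by positivity : (0 : ℝ) ≤ L ^ 3)]
  refine ⟨by nlinarith [mul_nonneg hq (by linarith : (0 : ℝ) ≤ L)], ?_⟩
  rw [rpow_def_of_pos h0, hlogδ, ← exp_log (by norm_num : (0 : ℝ) < 4), ← exp_add]
  gcongr
  linarith

lemma le_ofReal_max_one_mul_rpow {x : ℝ≥0∞} {δ δ₁ q : ℝ} (hδ : 0 < δ) (hδ₁ : 0 < δ₁)
    (hq : 0 ≤ q) (hx : x ≤ 1) (hsmall : δ ≤ δ₁ → x ≤ ENNReal.ofReal (δ ^ q)) :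
    x ≤ ENNReal.ofReal (max 1 (δ₁ ^ (-q)) * δ ^ q) := by
  rcases le_or_gt δ δ₁ with h | h
  · exact (hsmall h).trans (ENNReal.ofReal_le_ofReal
      (le_mul_of_one_le_left (by positivity) (le_max_left _ _)))
  · refine hx.trans (ENNReal.one_le_ofReal.2 ?_)
    calc (1 : ℝ) = δ₁ ^ (-q) * δ₁ ^ q := by rw [← rpow_add hδ₁]; simp
      _ ≤ max 1 (δ₁ ^ (-q)) * δ ^ q := by gcongr; exact le_max_right _ _

theorem scheme_large_increment_eps2_general
    {Ω : Type*} [MeasurableSpace Ω] (P : Measure Ω) [IsProbabilityMeasure P]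
    (W : ℝ → Ω → ℝ) (hW : IsBrownianMotion P W)
    (b s : ℝ → ℝ) (k : ℕ) (hk : 0 < k) (ξ : Fin k → ℝ)
    (hs1 : ∃ L : ℝ≥0, LipschitzWith L s)
    (x₀ : ℝ) (hbC : Continuous b)
    (ε₀ : ℝ) (hε₀ : ε₀ ∈ Set.Ioc (0 : ℝ) 1)
    (δ₀ : ℝ) (hδ₀ : δ₀ ∈ Set.Ioo (0 : ℝ) 1)
    (hδ₀' : ∀ δ ∈ Set.Ioc (0 : ℝ) δ₀, eps2 δ ≤ eps1 δ ∧ eps1 δ ≤ ε₀ / 2)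
    (α : ℝ) (hα : 0 < α) (q : ℝ) (hq : 1 ≤ q) :
    ∃ c : ℝ, 0 < c ∧ ∀ δ ∈ Set.Ioc (0 : ℝ) δ₀, ∀ t ∈ Set.Icc (0 : ℝ) 1,
      P {ω | α * eps2 δ ≤ |lastVal b s (Set.range ξ) x₀ W δ t ω - scheme b s (Set.range ξ) x₀ W δ t ω| ∧
          Metric.infDist (lastVal b s (Set.range ξ) x₀ W δ t ω) (Set.range ξ) < eps2 δ}
        ≤ ENNReal.ofReal (c * δ ^ q) := by
  have hΘ : (Set.range ξ).Nonempty := ⟨ξ ⟨0, hk⟩, mem_range_self _⟩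
  obtain ⟨L, hL⟩ := hs1
  obtain ⟨C₀, hC₀⟩ := exists_bound_milsteinCoeffs
    ((finite_range ξ).isBounded.thickening (δ := 1)) hbC hL
  set C := max C₀ α
  obtain ⟨δ₂, hδ₂, hsmall⟩ :=
    exists_forall_four_mul_exp_neg_le_rpow (c := α ^ 2 / (1152 * C ^ 2)) (by positivity)
      (by linarith : 0 ≤ q)
  have hδ₁ : 0 < min δ₂ (α / (3 * C)) := lt_min hδ₂ (by positivity)
  refine ⟨max 1 (min δ₂ (α / (3 * C)) ^ (-q)), by positivity, fun δ hδ t ht =>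
    le_ofReal_max_one_mul_rpow hδ.1 hδ₁ (by linarith) prob_le_one fun hδδ₁ => ?_⟩
  have hε : eps2 δ ≤ 1 := by linarith [hδ₀' δ hδ, hε₀.2]
  obtain ⟨hK, hbound⟩ := hsmall δ ⟨hδ.1, hδδ₁.trans (min_le_left _ _)⟩
  refine (measure_le_abs_lastVal_sub_scheme_le hW hδ.1 (hδ.2.trans_lt hδ₀.2) ht.1 hα
    (le_max_right _ _) (fun y hy => ?_) hε ?_ hK).trans (ENNReal.ofReal_le_ofReal hbound)
  · obtain ⟨hb, hs, hss⟩ := hC₀ y ((Metric.mem_thickening_iff_infDist_lt hΘ).2 (hy.trans_le hε))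
    exact ⟨hb.trans (le_max_left _ _), hs.trans (le_max_left _ _), hss.trans (le_max_left _ _)⟩
  · have := (le_div_iff₀ (by positivity)).1 (hδδ₁.trans (min_le_right _ _))
    linarith

/-- Lemma 5.5(i): probability that the increment exceeds `α·ε₂^δ` while
`X̂^δ_(t̲^δ) ∈ Θ^(ε₂^δ)` is of order `δ^q`. -/
theorem scheme_large_increment_eps2
    {Ω : Type*} [MeasurableSpace Ω] (P : Measure Ω) [IsProbabilityMeasure P]
    (W : ℝ → Ω → ℝ) (hW : IsBrownianMotion P W)
    (b s : ℝ → ℝ) (k : ℕ) (hk : 0 < k) (ξ : Fin k → ℝ) (hξ : StrictMono ξ)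
    (hb1 : PiecewiseLipschitz ξ b) (hb2 : PiecewiseC1Lipschitz ξ b)
    (hs1 : ∃ L : ℝ≥0, LipschitzWith L s) (hs0 : ∀ i, s (ξ i) ≠ 0)
    (hs2 : PiecewiseC1Lipschitz ξ s)
    (x₀ : ℝ) (hbC : Continuous b)
    (ε₀ : ℝ) (hε₀ : ε₀ ∈ Set.Ioc (0 : ℝ) 1)
    (hgap : ∀ i j : Fin k, (i : ℕ) + 1 = (j : ℕ) → ε₀ ≤ (ξ j - ξ i) / 2)
    (δ₀ : ℝ) (hδ₀ : δ₀ ∈ Set.Ioo (0 : ℝ) 1)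
    (hδ₀' : ∀ δ ∈ Set.Ioc (0 : ℝ) δ₀, eps2 δ ≤ eps1 δ ∧ eps1 δ ≤ ε₀ / 2)
    (α : ℝ) (hα : 0 < α) (q : ℝ) (hq : 1 ≤ q) :
    ∃ c : ℝ, 0 < c ∧ ∀ δ ∈ Set.Ioc (0 : ℝ) δ₀, ∀ t ∈ Set.Icc (0 : ℝ) 1,
      P {ω | α * eps2 δ ≤ |lastVal b s (Set.range ξ) x₀ W δ t ω - scheme b s (Set.range ξ) x₀ W δ t ω| ∧
          Metric.infDist (lastVal b s (Set.range ξ) x₀ W δ t ω) (Set.range ξ) < eps2 δ}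
        ≤ ENNReal.ofReal (c * δ ^ q) :=
  scheme_large_increment_eps2_general P W hW b s k hk ξ hs1 x₀ hbC ε₀ hε₀ δ₀ hδ₀ hδ₀' α hα q hq

end AdaptiveQM
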